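/- Let A be a k-algebra that is a domain and let D be the k-subalgebra of A generated by all invertible elements of A. If A is left integral over D (for every f ∈ A there exist n ≥ 0 and d_0, …, d_n ∈ D, not all zero, with Σ_{s=0}^{n} d_s f^s = 0), then u_good(A) = A. In particular, for every division ring A that is a k-algebra, u_good(A) = A. (Corollary 1.4.) -/

import Mathlib

open scoped TensorProduct ENNReal

universe u v

variable (k : Type v) [Field k]

/-- An ℕ-filtration of a `k`-algebra `A`: an ascending chain of `k`-subspaces
`F 0 ⊆ F 1 ⊆ ⋯` with `k·1 ⊆ F 0`, `⋃ᵢ F i = A` and `F i * F j ⊆ F (i + j)`. -/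
structure AlgFiltration (A : Type u) [Ring A] [Algebra k A] where
  F : ℕ → Submodule k A
  one_mem : (1 : A) ∈ F 0
  mono : ∀ i, F i ≤ F (i + 1)
  exhaustive : ∀ a : A, ∃ i, a ∈ F i
  mul_mem : ∀ i j : ℕ, ∀ x ∈ F i, ∀ y ∈ F j, x * y ∈ F (i + j)

namespace AlgFiltration

variable {k} {A : Type u} [Ring A] [Algebra k A] (𝓕 : AlgFiltration k A)

/-- The Rees algebra `⊕ᵢ (F i) Xⁱ ⊆ A[X]` of a filtration. -/
def rees : Subalgebra k (Polynomial A) where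
  carrier := {p | ∀ i, p.coeff i ∈ 𝓕.F i}
  add_mem' := fun hp hq i => by
    simpa using (𝓕.F i).add_mem (hp i) (hq i)
  mul_mem' := fun {p q} hp hq i => by
    show (p * q).coeff i ∈ 𝓕.F i
    rw [Polynomial.coeff_mul]
    refine Submodule.sum_mem _ fun x hx => ?_
    have h := 𝓕.mul_mem x.1 x.2 _ (hp x.1) _ (hq x.2)
    rwa [Finset.HasAntidiagonal.mem_antidiagonal.mp hx] at h
  algebraMap_mem' := fun c i => by
    rcases i with _ | i
    · simpa [Polynomial.algebraMap_apply, Algebra.algebraMap_eq_smul_one] using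
        (𝓕.F 0).smul_mem c 𝓕.one_mem
    · simp [Polynomial.algebraMap_apply]

/-- The element `X` of the Rees algebra. -/
noncomputable def xElem : 𝓕.rees :=
  ⟨Polynomial.X, fun i => by
    rcases i with _ | _ | i
    · simp
    · simpa [Polynomial.coeff_X] using 𝓕.mono 0 𝓕.one_mem
    · simp [Polynomial.coeff_X]⟩

/-- The associated graded algebra `gr_F(A) = ⊕ᵢ F i / F (i-1)` of a filtration, realized as
the Rees algebra modulo the two-sided ideal generated by the central element `X`. -/
def gr : Type u := RingQuot (fun a b : 𝓕.rees => a = 𝓕.xElem ∧ b = 0)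

noncomputable instance : Ring 𝓕.gr :=
  inferInstanceAs (Ring (RingQuot (fun a b : 𝓕.rees => a = 𝓕.xElem ∧ b = 0)))

noncomputable instance : Algebra k 𝓕.gr :=
  inferInstanceAs (Algebra k (RingQuot (fun a b : 𝓕.rees => a = 𝓕.xElem ∧ b = 0)))

/-- The `k`-linear map sending `a ∈ F i` to the monomial `a Xⁱ` in the Rees algebra. -/
noncomputable def monoMap (i : ℕ) : 𝓕.F i →ₗ[k] 𝓕.rees where
  toFun a :=
    ⟨Polynomial.monomial i (a : A), fun j => by
      rcases eq_or_ne j i with rfl | h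
      · simp only [Polynomial.coeff_monomial, if_pos rfl]
        exact a.2
      · simp [Polynomial.coeff_monomial, h, Ne.symm h]⟩
  map_add' a b := by
    ext
    simp
  map_smul' c a := by
    ext
    simp

/-- The canonical projection from the Rees algebra onto the associated graded algebra. -/
noncomputable def grProj : 𝓕.rees →ₐ[k] 𝓕.gr :=
  RingQuot.mkAlgHom k (fun a b : 𝓕.rees => a = 𝓕.xElem ∧ b = 0)

/-- The degree-`i` homogeneous component `F i / F (i-1)` of the associated graded algebra,
realized as the image of `(F i) Xⁱ` under the projection. -/
noncomputable def grPiece (i : ℕ) : Submodule k 𝓕.gr :=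
  LinearMap.range (𝓕.grProj.toLinearMap ∘ₗ 𝓕.monoMap i)

end AlgFiltration

/-- A `k`-algebra `A` is a firm domain if `A ⊗[k] B` is a domain for every `k`-algebra `B`
which is a domain. -/
def IsFirmDomain (A : Type u) [Ring A] [Algebra k A] : Prop :=
  ∀ (B : Type u) [Ring B] [Algebra k B], IsDomain B → IsDomain (A ⊗[k] B)

/-- A filtration is good if its associated graded algebra is a domain.
`uGood k A` is the subspace of universally degree-`0` elements with respect to good
ℕ-filtrations: the intersection of `F 0` over all good ℕ-filtrations of `A`. -/
noncomputable def uGood (A : Type u) [Ring A] [Algebra k A] : Submodule k A :=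
  ⨅ (𝓕 : AlgFiltration k A) (_ : IsDomain 𝓕.gr), 𝓕.F 0

/-- A filtration is firm if its associated graded algebra is a firm domain.
`uFirm k A` is the intersection of `F 0` over all firm ℕ-filtrations of `A`. -/
noncomputable def uFirm (A : Type u) [Ring A] [Algebra k A] : Submodule k A :=
  ⨅ (𝓕 : AlgFiltration k A) (_ : IsFirmDomain k 𝓕.gr), 𝓕.F 0

/-- The Gelfand–Kirillov dimension of a `k`-algebra `A`: the supremum, over all
finite-dimensional subspaces `V ⊆ A` containing `1`, of `limsup_n log(dim Vⁿ)/log n`. -/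
noncomputable def GKdim (A : Type u) [Ring A] [Algebra k A] : ℝ≥0∞ :=
  ⨆ (V : Submodule k A) (_ : (1 : A) ∈ V) (_ : FiniteDimensional k V),
    Filter.limsup
      (fun n : ℕ => ENNReal.ofReal (Real.log (Module.finrank k ↥(V ^ n)) / Real.log n))
      Filter.atTop

/-- `R` is GKdim-additive if it has finite GK-dimension and
`GKdim (A ⊗ R) = GKdim A + GKdim R` for every `k`-algebra `A`. -/
def IsGKAdditive (R : Type u) [Ring R] [Algebra k R] : Prop :=
  GKdim k R < ⊤ ∧
    ∀ (A : Type u) [Ring A] [Algebra k A], GKdim k (A ⊗[k] R) = GKdim k A + GKdim k R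

/-- Membership in the family `𝓡₁` of GKdim-additive firm domains `R` with `u_firm(R) = k·1`. -/
def InR1 (R : Type u) [Ring R] [Algebra k R] : Prop :=
  IsGKAdditive k R ∧ IsFirmDomain k R ∧ uFirm k R = 1

/-- Membership in the family `𝓡₂` of GKdim-additive domains `R` with `u_good(R) = k·1`. -/
def InR2 (R : Type u) [Ring R] [Algebra k R] : Prop :=
  IsGKAdditive k R ∧ IsDomain R ∧ uGood k R = 1

/-- The canonical image of `P ⊗ Q` in `M ⊗[k] N`, for subspaces `P ⊆ M` and `Q ⊆ N`. -/
def tensorSub {M N : Type u} [Ring M] [Ring N] [Algebra k M] [Algebra k N]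
    (P : Submodule k M) (Q : Submodule k N) : Submodule k (M ⊗[k] N) :=
  Submodule.span k {z | ∃ x ∈ P, ∃ y ∈ Q, z = x ⊗ₜ[k] y}


/-!
In a good filtration every unit `u` lies in `F 0`: the symbols of `u` and `u⁻¹` multiply to the
symbol of `1` in degree `deg u + deg u⁻¹`, which vanishes unless that degree is `0`. Hence the
subalgebra generated by the units lies in `F 0`. If `a ∉ F 0` had degree `i > 0` and
`∑ d_s a^s = 0` with top coefficient `d_m ≠ 0`, then `d_m a^m` would have a nonzero symbol in
degree `i m` because `gr` is a domain, yet `d_m a^m = -∑_{s<m} d_s a^s ∈ F (i (m - 1))`.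
-/

open Polynomial

theorem Polynomial.eval_ofFn {R : Type*} [Semiring R] [DecidableEq R] (n : ℕ) (v : Fin n → R)
    (x : R) : (ofFn n v).eval x = ∑ i, v i * x ^ (i : ℕ) := by
  simp [ofFn_eq_sum_monomial, eval_finsetSum]

theorem Polynomial.coeff_ofFn_mem {R S : Type*} [Semiring R] [DecidableEq R] [SetLike S R]
    [ZeroMemClass S R] {s : S} {n : ℕ} {v : Fin n → R} (hv : ∀ i, v i ∈ s) (j : ℕ) :
    (ofFn n v).coeff j ∈ s := by
  rcases lt_or_ge j n with hj | hj
  · rw [ofFn_coeff_eq_val_of_lt v hj]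
    exact hv _
  · rw [ofFn_coeff_eq_zero_of_ge v hj]
    exact zero_mem s

theorem Polynomial.ofFn_ne_zero {R : Type*} [Semiring R] [DecidableEq R] {n : ℕ}
    {v : Fin n → R} (hv : v ≠ 0) : ofFn n v ≠ 0 := by
  rw [← ofFn_zero n]
  exact (injective_ofFn n).ne hv

namespace AlgFiltration

variable {k} {A : Type*} [Ring A] [Algebra k A] (𝓕 : AlgFiltration k A)

theorem F_mono : Monotone 𝓕.F := monotone_nat_of_le_succ 𝓕.mono

/-- `Fpred i` is `F (i - 1)`, with the convention `F (-1) = 0`. -/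
def Fpred : ℕ → Submodule k A
  | 0 => ⊥
  | i + 1 => 𝓕.F i

theorem F_le_Fpred {i j : ℕ} (h : i < j) : 𝓕.F i ≤ 𝓕.Fpred j := by
  obtain ⟨j, rfl⟩ := Nat.exists_eq_add_of_lt h
  exact 𝓕.F_mono (Nat.le_add_right i j)

theorem mul_mem_Fpred_of_left {i j : ℕ} {x y : A} (hx : x ∈ 𝓕.Fpred i) (hy : y ∈ 𝓕.F j) :
    x * y ∈ 𝓕.Fpred (i + j) := by
  cases i with
  | zero =>
    rw [(Submodule.mem_bot k).mp hx, zero_mul]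
    exact zero_mem _
  | succ i =>
    rw [Nat.succ_add]
    exact 𝓕.mul_mem _ _ x hx y hy

theorem mul_mem_Fpred_of_right {i j : ℕ} {x y : A} (hx : x ∈ 𝓕.F i) (hy : y ∈ 𝓕.Fpred j) :
    x * y ∈ 𝓕.Fpred (i + j) := by
  cases j with
  | zero =>
    rw [(Submodule.mem_bot k).mp hy, mul_zero]
    exact zero_mem _
  | succ j =>
    rw [← Nat.add_assoc]
    exact 𝓕.mul_mem _ _ x hx y hy

/-- The ideal `X · rees` of the Rees algebra, described coefficientwise. -/
noncomputable def xIdeal : TwoSidedIdeal 𝓕.rees :=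
  .mk' {p | ∀ i, (p : A[X]).coeff i ∈ 𝓕.Fpred i}
    (fun i => by simp)
    (fun hp hq i => by simpa using add_mem (hp i) (hq i))
    (fun hp i => by simpa using neg_mem (hp i))
    (fun {p q} hq i => by
      rw [Subalgebra.coe_mul, coeff_mul]
      refine sum_mem fun x hx => ?_
      rw [← Finset.HasAntidiagonal.mem_antidiagonal.mp hx]
      exact 𝓕.mul_mem_Fpred_of_right (p.2 x.1) (hq x.2))
    (fun {p q} hp i => by
      rw [Subalgebra.coe_mul, coeff_mul]
      refine sum_mem fun x hx => ?_
      rw [← Finset.HasAntidiagonal.mem_antidiagonal.mp hx]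
      exact 𝓕.mul_mem_Fpred_of_left (hp x.1) (q.2 x.2))

theorem mem_xIdeal_iff (p : 𝓕.rees) : p ∈ 𝓕.xIdeal ↔ ∀ i, (p : A[X]).coeff i ∈ 𝓕.Fpred i :=
  TwoSidedIdeal.mem_mk' _ _ _ _ _ _ _

theorem xElem_mem_xIdeal : 𝓕.xElem ∈ 𝓕.xIdeal := by
  rw [mem_xIdeal_iff]
  rintro (_ | _ | i)
  · simp [xElem, Fpred]
  · simpa [xElem, Fpred] using 𝓕.one_mem
  · simp [xElem, coeff_X]

/-- Equality in `RingQuot` is not explicit; mapping to the explicit quotient by `xIdeal` is what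
shows that a symbol of an element outside `Fpred i` does not vanish. -/
noncomputable def grToQuot : 𝓕.gr →+* 𝓕.xIdeal.ringCon.Quotient :=
  RingQuot.lift ⟨𝓕.xIdeal.ringCon.mk', by
    rintro _ _ ⟨rfl, rfl⟩
    rw [map_zero, ← TwoSidedIdeal.mem_ker, TwoSidedIdeal.ker_ringCon_mk']
    exact 𝓕.xElem_mem_xIdeal⟩

theorem grToQuot_grProj (p : 𝓕.rees) : 𝓕.grToQuot (𝓕.grProj p) = 𝓕.xIdeal.ringCon.mk' p := by
  rw [← RingQuot.lift_mkRingHom_apply 𝓕.xIdeal.ringCon.mk']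
  exact congrArg 𝓕.grToQuot (RingHom.congr_fun (RingQuot.mkAlgHom_coe k _) p)

theorem grProj_xElem : 𝓕.grProj 𝓕.xElem = 0 := by
  rw [← map_zero 𝓕.grProj]
  exact RingQuot.mkAlgHom_rel k ⟨rfl, rfl⟩

theorem grProj_monoMap_eq_zero_iff {i : ℕ} (a : 𝓕.F i) :
    𝓕.grProj (𝓕.monoMap i a) = 0 ↔ (a : A) ∈ 𝓕.Fpred i := by
  constructor
  · intro h
    have hmem : 𝓕.monoMap i a ∈ 𝓕.xIdeal := by
      rw [← TwoSidedIdeal.ker_ringCon_mk' 𝓕.xIdeal, TwoSidedIdeal.mem_ker, ← grToQuot_grProj, h,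
        map_zero]
    simpa [monoMap] using (𝓕.mem_xIdeal_iff _).mp hmem i
  · intro h
    cases i with
    | zero =>
      rw [show a = 0 from Subtype.ext ((Submodule.mem_bot k).mp h), map_zero, map_zero]
    | succ i =>
      have hX : 𝓕.monoMap (i + 1) a = 𝓕.xElem * 𝓕.monoMap i ⟨a, h⟩ :=
        Subtype.ext (X_mul_monomial i (a : A)).symm
      rw [hX, map_mul, grProj_xElem, zero_mul]

def HasDegree (a : A) (i : ℕ) : Prop := a ∈ 𝓕.F i ∧ a ∉ 𝓕.Fpred i

theorem exists_hasDegree {a : A} (ha : a ≠ 0) : ∃ i, 𝓕.HasDegree a i := by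
  classical
  have h := 𝓕.exhaustive a
  refine ⟨Nat.find h, Nat.find_spec h, ?_⟩
  cases hi : Nat.find h with
  | zero => simpa [Fpred] using ha
  | succ i => exact Nat.find_min h (by omega)

theorem hasDegree_zero {a : A} (ha : a ∈ 𝓕.F 0) (ha0 : a ≠ 0) : 𝓕.HasDegree a 0 :=
  ⟨ha, by simpa [Fpred] using ha0⟩

variable {𝓕}

theorem HasDegree.mul [IsDomain 𝓕.gr] {a b : A} {i j : ℕ} (ha : 𝓕.HasDegree a i)
    (hb : 𝓕.HasDegree b j) : 𝓕.HasDegree (a * b) (i + j) := by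
  refine ⟨𝓕.mul_mem i j a ha.1 b hb.1, fun hab => ?_⟩
  have hmul : 𝓕.monoMap (i + j) ⟨a * b, 𝓕.mul_mem i j a ha.1 b hb.1⟩
      = 𝓕.monoMap i ⟨a, ha.1⟩ * 𝓕.monoMap j ⟨b, hb.1⟩ :=
    Subtype.ext (monomial_mul_monomial i j a b).symm
  have hzero := (𝓕.grProj_monoMap_eq_zero_iff ⟨a * b, 𝓕.mul_mem i j a ha.1 b hb.1⟩).mpr hab
  rw [hmul, map_mul] at hzero
  rcases mul_eq_zero.mp hzero with h | h
  · exact ha.2 ((𝓕.grProj_monoMap_eq_zero_iff _).mp h)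
  · exact hb.2 ((𝓕.grProj_monoMap_eq_zero_iff _).mp h)

theorem HasDegree.pow [IsDomain 𝓕.gr] [Nontrivial A] {a : A} {i : ℕ} (ha : 𝓕.HasDegree a i) :
    ∀ m : ℕ, 𝓕.HasDegree (a ^ m) (i * m)
  | 0 => by simpa using 𝓕.hasDegree_zero 𝓕.one_mem one_ne_zero
  | m + 1 => by
    rw [pow_succ, Nat.mul_succ]
    exact (ha.pow m).mul ha

theorem mem_F_zero_of_isUnit [IsDomain 𝓕.gr] [Nontrivial A] {u : A} (hu : IsUnit u) :
    u ∈ 𝓕.F 0 := by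
  obtain ⟨v, huv⟩ := hu.exists_right_inv
  obtain ⟨i, hi⟩ := 𝓕.exists_hasDegree hu.ne_zero
  obtain ⟨j, hj⟩ := 𝓕.exists_hasDegree (right_ne_zero_of_mul_eq_one huv)
  have hone := hi.mul hj
  rw [huv] at hone
  have hij : i + j = 0 := by
    by_contra h
    exact hone.2 (𝓕.F_le_Fpred (Nat.pos_of_ne_zero h) 𝓕.one_mem)
  simpa [show i = 0 by omega] using hi.1

theorem mem_F_zero_of_mem_adjoin_isUnit [IsDomain 𝓕.gr] [Nontrivial A] {x : A}
    (hx : x ∈ Algebra.adjoin k {x : A | IsUnit x}) : x ∈ 𝓕.F 0 :=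
  Algebra.adjoin_le
    (S := (𝓕.F 0).toSubalgebra 𝓕.one_mem fun x y hx hy => 𝓕.mul_mem 0 0 x hx y hy)
    (fun _ hu => mem_F_zero_of_isUnit hu) hx

theorem mem_F_zero_of_eval_eq_zero [IsDomain 𝓕.gr] [Nontrivial A] {p : A[X]} (hp : p ≠ 0)
    (hpF : ∀ i, p.coeff i ∈ 𝓕.F 0) {a : A} (hpa : p.eval a = 0) : a ∈ 𝓕.F 0 := by
  by_contra ha
  have ha0 : a ≠ 0 := by
    rintro rfl
    exact ha (zero_mem _)
  obtain ⟨i, hi⟩ := 𝓕.exists_hasDegree ha0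
  have hi0 : 0 < i := Nat.pos_of_ne_zero (by rintro rfl; exact ha hi.1)
  set m := p.natDegree
  have hlead : 𝓕.HasDegree (p.coeff m * a ^ m) (i * m) := by
    simpa using (𝓕.hasDegree_zero (hpF m) (leadingCoeff_ne_zero.mpr hp)).mul (hi.pow m)
  have hlower : ∀ s < m, p.coeff s * a ^ s ∈ 𝓕.Fpred (i * m) := fun s hs =>
    𝓕.F_le_Fpred (Nat.mul_lt_mul_of_pos_left hs hi0)
      (by simpa using 𝓕.mul_mem 0 _ _ (hpF s) _ (hi.pow s).1)
  rw [eval_eq_sum_range, Finset.sum_range_succ, add_eq_zero_iff_neg_eq] at hpa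
  exact hlead.2 (hpa ▸ neg_mem (sum_mem fun s hs => hlower s (Finset.mem_range.mp hs)))

end AlgFiltration

section

variable {k} {A : Type*} [Ring A] [Algebra k A]

theorem uGood_eq_top_of_forall_mem_F_zero
    (h : ∀ 𝓕 : AlgFiltration k A, IsDomain 𝓕.gr → ∀ a, a ∈ 𝓕.F 0) : uGood k A = ⊤ :=
  Submodule.eq_top_iff'.mpr fun a =>
    Submodule.mem_iInf _ |>.mpr fun 𝓕 => Submodule.mem_iInf _ |>.mpr fun h𝓕 => h 𝓕 h𝓕 a

theorem uGood_eq_top_of_forall_exists_sum_adjoin_isUnit [Nontrivial A]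
    (hint : ∀ f : A, ∃ (n : ℕ) (d : Fin (n + 1) → A),
      (∀ s, d s ∈ Algebra.adjoin k {x : A | IsUnit x}) ∧ (∃ s, d s ≠ 0) ∧
        ∑ s, d s * f ^ (s : ℕ) = 0) :
    uGood k A = ⊤ := by
  classical
  refine uGood_eq_top_of_forall_mem_F_zero fun 𝓕 _ a => ?_
  obtain ⟨n, d, hdD, ⟨s, hs⟩, hsum⟩ := hint a
  exact 𝓕.mem_F_zero_of_eval_eq_zero (ofFn_ne_zero fun h => hs (congrFun h s))
    (coeff_ofFn_mem fun s => 𝓕.mem_F_zero_of_mem_adjoin_isUnit (hdD s))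
    ((eval_ofFn _ d a).trans hsum)

end

/-- Corollary 1.4: if a domain `A` is left integral over the subalgebra generated by its
invertible elements then `u_good(A) = A`; in particular `u_good(A) = A` for every division
ring `A` which is a `k`-algebra. -/
theorem statement16 {k : Type v} [Field k] :
    (∀ (A : Type u) [Ring A] [Algebra k A], IsDomain A →
      (∀ f : A, ∃ (n : ℕ) (d : Fin (n + 1) → A),
        (∀ s, d s ∈ Algebra.adjoin k {x : A | IsUnit x}) ∧ (∃ s, d s ≠ 0) ∧
          ∑ s, d s * f ^ (s : ℕ) = 0) →
      uGood k A = ⊤) ∧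
    (∀ (A : Type u) [DivisionRing A] [Algebra k A], uGood k A = ⊤) := by
  refine ⟨fun A _ _ _ => uGood_eq_top_of_forall_exists_sum_adjoin_isUnit,
    fun A _ _ => uGood_eq_top_of_forall_exists_sum_adjoin_isUnit fun f =>
      ⟨1, ![-f, 1], fun s => ?_, ⟨1, by simp⟩, by simp [Fin.sum_univ_two]⟩⟩
  fin_cases s
  · rcases eq_or_ne f 0 with rfl | hf
    · simp
    · exact neg_mem (Algebra.subset_adjoin (IsUnit.mk0 f hf))
  · exact one_mem _
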